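/- For γ = 0 (so b(x) = -2x and σ(x) = |x| Π_{x⊥}), and A(x,y) as in the coupling matrix construction, one has for all x, y ∈ ℝ³: (x-y)·(b(x)-b(y)) + ‖σ(x) - A(x,y)‖² = -2|x||y| + 2 x·y ≤ 0. -/

import Mathlib

noncomputable section
open Matrix
open scoped Classical

abbrev E3 := EuclideanSpace ℝ (Fin 3)
abbrev M3 := Matrix (Fin 3) (Fin 3) ℝ

def proj3 (x : E3) : M3 :=
  1 - (‖x‖ ^ 2)⁻¹ • Matrix.vecMulVec (fun i => x i) (fun i => x i)

/-- Maxwell molecules case (`γ = 0`): `a(v) = |v|² Π_{v⊥}`. -/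
def amat0 (v : E3) : M3 := if v = 0 then 0 else (‖v‖ ^ 2) • proj3 v

/-- Maxwell molecules case: `σ(v) = |v| Π_{v⊥}`. -/
def sigmat0 (v : E3) : M3 := if v = 0 then 0 else ‖v‖ • proj3 v

/-- Maxwell molecules case: `b(v) = -2v`. -/
def bvec0 (v : E3) : E3 := (-2 : ℝ) • v

def frobSq (A : M3) : ℝ := Matrix.trace (A * Aᵀ)

/-!
Since `σ(x)σ(x)ᵀ = a(x)` and `Π_{x⊥}` has trace 2, both `σ(x)` and `A` have squared Frobenius
norm `2|·|²`, so expanding `‖σ(x) - A‖²` needs only the prescribed cross term `tr(σ(x)Aᵀ)`.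
With the drift term `-2|x - y|²` everything collapses to `-2(|x||y| - x·y)`, which is
nonpositive by Cauchy–Schwarz.
-/

theorem EuclideanSpace.dotProduct_self_eq_norm_sq {n : Type*} [Fintype n]
    (x : EuclideanSpace ℝ n) : (fun i => x i) ⬝ᵥ (fun i => x i) = ‖x‖ ^ 2 := by
  simp only [EuclideanSpace.real_norm_sq_eq, dotProduct, ← sq]

theorem Matrix.trace_sub_mul_transpose_sub {n R : Type*} [Fintype n] [CommRing R]
    (S A : Matrix n n R) :
    trace ((S - A) * (S - A)ᵀ) = trace (S * Sᵀ) - 2 * trace (S * Aᵀ) + trace (A * Aᵀ) := by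
  have hsymm : trace (A * Sᵀ) = trace (S * Aᵀ) := by
    rw [← trace_transpose, transpose_mul, transpose_transpose]
  rw [transpose_sub, sub_mul, mul_sub, mul_sub, trace_sub, trace_sub, trace_sub, hsymm]
  ring

theorem frobSq_sub (S A : M3) : frobSq (S - A) = frobSq S - 2 * trace (S * Aᵀ) + frobSq A :=
  trace_sub_mul_transpose_sub S A

theorem proj3_transpose (x : E3) : (proj3 x)ᵀ = proj3 x := by
  simp [proj3, transpose_sub]

theorem proj3_mul_self {x : E3} (hx : x ≠ 0) : proj3 x * proj3 x = proj3 x := by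
  have hn : ‖x‖ ^ 2 ≠ 0 := pow_ne_zero _ (norm_ne_zero_iff.mpr hx)
  simp only [proj3, sub_mul, mul_sub, one_mul, mul_one, Matrix.smul_mul, Matrix.mul_smul,
    vecMulVec_mul_vecMulVec, EuclideanSpace.dotProduct_self_eq_norm_sq, vecMulVec_smul,
    smul_smul]
  rw [inv_mul_cancel₀ hn]
  module

theorem sigmat0_mul_transpose (x : E3) : sigmat0 x * (sigmat0 x)ᵀ = amat0 x := by
  by_cases hx : x = 0
  · simp [sigmat0, amat0, hx]
  · simp only [sigmat0, amat0, if_neg hx, transpose_smul, proj3_transpose, Matrix.smul_mul,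
      Matrix.mul_smul, smul_smul, proj3_mul_self hx]
    rw [← sq]

theorem trace_proj3 {x : E3} (hx : x ≠ 0) : trace (proj3 x) = 2 := by
  have hn : ‖x‖ ^ 2 ≠ 0 := pow_ne_zero _ (norm_ne_zero_iff.mpr hx)
  rw [proj3, trace_sub, trace_smul, trace_vecMulVec, EuclideanSpace.dotProduct_self_eq_norm_sq,
    smul_eq_mul, inv_mul_cancel₀ hn, trace_one, Fintype.card_fin]
  norm_num

theorem trace_amat0 (v : E3) : trace (amat0 v) = 2 * ‖v‖ ^ 2 := by
  by_cases hv : v = 0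
  · simp [amat0, hv]
  · rw [amat0, if_neg hv, trace_smul, trace_proj3 hv, smul_eq_mul, mul_comm]

theorem frobSq_sigmat0 (x : E3) : frobSq (sigmat0 x) = 2 * ‖x‖ ^ 2 := by
  rw [frobSq, sigmat0_mul_transpose, trace_amat0]

theorem inner_sub_bvec0_sub (x y : E3) :
    (inner ℝ (x - y) (bvec0 x - bvec0 y) : ℝ) = -2 * ‖x - y‖ ^ 2 := by
  rw [bvec0, bvec0, ← smul_sub, real_inner_smul_right, real_inner_self_eq_norm_sq]

theorem maxwell_coupling_dissipation (x y : E3) (A : M3)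
    (hAa : A * Aᵀ = amat0 y)
    (hAtr : Matrix.trace (sigmat0 x * Aᵀ) = ‖x‖ * ‖y‖ + (inner ℝ x y : ℝ)) :
    (inner ℝ (x - y) (bvec0 x - bvec0 y) : ℝ) + frobSq (sigmat0 x - A)
        = -2 * ‖x‖ * ‖y‖ + 2 * (inner ℝ x y : ℝ) ∧
    (inner ℝ (x - y) (bvec0 x - bvec0 y) : ℝ) + frobSq (sigmat0 x - A) ≤ 0 := by
  have hA : frobSq A = 2 * ‖y‖ ^ 2 := by rw [frobSq, hAa, trace_amat0]
  have heq : (inner ℝ (x - y) (bvec0 x - bvec0 y) : ℝ) + frobSq (sigmat0 x - A)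
      = -2 * ‖x‖ * ‖y‖ + 2 * (inner ℝ x y : ℝ) := by
    rw [inner_sub_bvec0_sub, norm_sub_sq_real, frobSq_sub, frobSq_sigmat0, hAtr, hA]
    ring
  exact ⟨heq, heq ▸ by linarith [real_inner_le_norm x y]⟩
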